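/- arXiv:2602.06950 — 4 statements merged into one kernel-verified Lean document; each statement's English description precedes it below -/
import Mathlib

section
/- If T is a single-elimination tournament, σ a scoring system, and u a vertex of T, then T_u is a single-elimination tournament whose unique sink is u, the in-neighborhood of every vertex v of T_u taken in T_u equals its in-neighborhood taken in T, and the set of matches of T_u equals M(T) ∩ V(T_u) (so that σ_u is a scoring system of T_u). -/
namespace SETour

variable {V : Type*}

/-- `a` is a player, i.e. a source of the digraph. -/
def IsPlayer (adj : V → V → Prop) (a : V) : Prop := ∀ u, ¬ adj u a

/-- `x` is a match, i.e. a non-source vertex. -/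
def IsMatch (adj : V → V → Prop) (x : V) : Prop := ¬ IsPlayer adj x

/-- `z` is a sink, i.e. has no out-neighbors. -/
def IsSink (adj : V → V → Prop) (z : V) : Prop := ∀ w, ¬ adj z w

/-- A single-elimination tournament: exactly one sink, every non-sink vertex has
exactly one out-neighbor (at most one out-neighbor in general), no directed cycles,
and no vertex has exactly one in-neighbor. -/
structure IsSETournament (adj : V → V → Prop) : Prop where
  unique_sink : ∃! z, IsSink adj z
  out_unique : ∀ ⦃v w w'⦄, adj v w → adj v w' → w = w'
  acyclic : ∀ v, ¬ Relation.TransGen adj v v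
  in_ne_one : ∀ v, {u | adj u v}.ncard ≠ 1

/-- The set of players of the tournament. -/
def players (adj : V → V → Prop) : Set V := {a | IsPlayer adj a}

/-- The player set `P(u)`: all players having a directed walk to `u`. -/
def playerSet (adj : V → V → Prop) (u : V) : Set V :=
  {a | IsPlayer adj a ∧ Relation.ReflTransGen adj a u}

/-- A bracket: a function from vertices to players fixing players, in which the
winner of each match is the winner of one of the matches feeding into it. -/
structure IsBracket (adj : V → V → Prop) (B : V → V) : Prop where
  toPlayer : ∀ v, IsPlayer adj (B v)
  player_fix : ∀ a, IsPlayer adj a → B a = a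
  match_pred : ∀ x, IsMatch adj x → ∃ u, adj u x ∧ B x = B u

/-- A scoring system: positive reals on matches. -/
def IsScoring (adj : V → V → Prop) (σ : V → ℝ) : Prop :=
  ∀ x, IsMatch adj x → 0 < σ x

/-- The σ-score of two brackets: the sum of σ over the matches on which they agree. -/
noncomputable def score (adj : V → V → Prop) (σ : V → ℝ) (B B' : V → V) : ℝ :=
  ∑ᶠ x ∈ {x | IsMatch adj x ∧ B x = B' x}, σ x

/-- A set of brackets is σ-resolving if any two distinct brackets are
distinguished by their σ-score against some member of the set. -/
def IsResolving (adj : V → V → Prop) (σ : V → ℝ) (𝓑 : Set (V → V)) : Prop :=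
  ∀ B B' : V → V, IsBracket adj B → IsBracket adj B' → B ≠ B' →
    ∃ Bi ∈ 𝓑, score adj σ Bi B ≠ score adj σ Bi B'

/-- The metric dimension: minimum size of a σ-resolving set of brackets. -/
noncomputable def dimT (adj : V → V → Prop) (σ : V → ℝ) : ℕ :=
  sInf {n | ∃ 𝓑 : Set (V → V), (∀ B ∈ 𝓑, IsBracket adj B) ∧
    IsResolving adj σ 𝓑 ∧ 𝓑.ncard = n}

/-- The resolving number: minimum `r` such that every set of `r` distinct
brackets is σ-resolving. -/
noncomputable def resT (adj : V → V → Prop) (σ : V → ℝ) : ℕ :=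
  sInf {r | ∀ 𝓑 : Set (V → V), (∀ B ∈ 𝓑, IsBracket adj B) → 𝓑.ncard = r →
    IsResolving adj σ 𝓑}

/-- `x` is the match where players `a` and `b` face off: it has in-neighbors
`u_a, u_b` with `P(u_a) ∩ {a,b} = {a}` and `P(u_b) ∩ {a,b} = {b}`. -/
def IsPairMatch (adj : V → V → Prop) (a b x : V) : Prop :=
  ∃ ua ub, adj ua x ∧ adj ub x ∧
    playerSet adj ua ∩ {a, b} = {a} ∧ playerSet adj ub ∩ {a, b} = {b}

open Classical in
/-- The bracket obtained from `B` by making player `a` win every match it can. -/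
noncomputable def favBracket (adj : V → V → Prop) (B : V → V) (a : V) : V → V :=
  fun u => if a ∈ playerSet adj u then a else B u

/-- A scoring system has distinct subset sums if distinct sets of matches have
distinct total scores. -/
def DistinctSubsetSums (adj : V → V → Prop) (σ : V → ℝ) : Prop :=
  ∀ M M' : Set V, (∀ x ∈ M, IsMatch adj x) → (∀ x ∈ M', IsMatch adj x) →
    ∑ᶠ x ∈ M, σ x = ∑ᶠ x ∈ M', σ x → M = M'

/-- The quantity `max_{x ∈ M(T)} (|P(x)| − max_{u ∈ N⁻(x)} |P(u)|)`. -/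
noncomputable def lbound (adj : V → V → Prop) : ℕ :=
  sSup {k | ∃ x, IsMatch adj x ∧
    k = (playerSet adj x).ncard - sSup {m | ∃ u, adj u x ∧ m = (playerSet adj u).ncard}}

/-- The vertex set of the sub-tournament `T_u`: vertices `v` with `P(v) ⊆ P(u)`. -/
def subVert (adj : V → V → Prop) (u : V) : Set V :=
  {v | playerSet adj v ⊆ playerSet adj u}

/-- The adjacency relation of the sub-tournament `T_u`. -/
def subAdj (adj : V → V → Prop) (u : V) : subVert adj u → subVert adj u → Prop :=
  fun v w => adj v.1 w.1

/-- A standard single-elimination tournament: one obtained from a complete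
(perfect) binary tree by orienting all edges towards its root.  Equivalently, a
single-elimination tournament in which every match has exactly two in-neighbors
and all players are at the same distance from the sink (witnessed by a depth
function decreasing by 1 along every edge and constant on players). -/
def IsStandard (adj : V → V → Prop) : Prop :=
  IsSETournament adj ∧
  (∀ x, IsMatch adj x → {u | adj u x}.ncard = 2) ∧
  ∃ (d : V → ℕ) (r : ℕ), (∀ v w, adj v w → d v = d w + 1) ∧
    ∀ a, IsPlayer adj a → d a = r

/-- Walks from a common vertex are comparable when out-degrees are ≤ 1. -/
lemma aux_comparable {adj : V → V → Prop}
    (hout : ∀ ⦃v w w'⦄, adj v w → adj v w' → w = w')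
    {a u u' : V} (h1 : Relation.ReflTransGen adj a u)
    (h2 : Relation.ReflTransGen adj a u') :
    Relation.ReflTransGen adj u u' ∨ Relation.ReflTransGen adj u' u := by
  revert h2
  induction h1 using Relation.ReflTransGen.head_induction_on with
  | refl => exact fun h2 => Or.inl h2
  | head hab hbu ih =>
    intro h2
    rcases h2.cases_head with rfl | ⟨c, hac, hcu'⟩
    · exact Or.inr (Relation.ReflTransGen.head hab hbu)
    · exact ih (by rwa [← hout hab hac] at hcu')

/-- Every vertex has some player with a walk to it. -/
lemma aux_exists_player [Finite V] {adj : V → V → Prop}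
    (hT : IsSETournament adj) (v : V) :
    ∃ a, IsPlayer adj a ∧ Relation.ReflTransGen adj a v := by
  haveI : IsIrrefl V (Relation.TransGen adj) := ⟨hT.acyclic⟩
  have hwf : WellFounded (Relation.TransGen adj) :=
    Finite.wellFounded_of_trans_of_irrefl _
  have hwf' : WellFounded adj :=
    Subrelation.wf (fun h => Relation.TransGen.single h) hwf
  induction v using hwf'.induction with
  | _ v ih =>
    by_cases hv : IsPlayer adj v
    · exact ⟨v, hv, .refl⟩
    · simp only [IsPlayer, not_forall, not_not] at hv
      obtain ⟨w, hw⟩ := hv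
      obtain ⟨a, ha, haw⟩ := ih w hw
      exact ⟨a, ha, haw.tail hw⟩

/-- In-neighbors of vertices of `T_u` belong to `T_u`. -/
lemma aux_mem_subVert_of_adj {adj : V → V → Prop} {u w v : V}
    (hv : v ∈ subVert adj u) (h : adj w v) : w ∈ subVert adj u :=
  fun a ha => hv ⟨ha.1, ha.2.tail h⟩

lemma aux_mem_subVert_of_rtg {adj : V → V → Prop} {u c v : V}
    (hv : v ∈ subVert adj u) (h : Relation.ReflTransGen adj c v) :
    c ∈ subVert adj u :=
  fun a ha => hv ⟨ha.1, ha.2.trans h⟩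

/-- `u` has no out-edge staying inside `T_u`. -/
lemma aux_sink_u [Finite V] {adj : V → V → Prop}
    (hT : IsSETournament adj) (u : V) :
    ∀ w, w ∈ subVert adj u → ¬ adj u w := by
  intro w hw huw
  have h1 : 0 < {x | adj x w}.ncard :=
    (Set.ncard_pos (Set.toFinite _)).2 ⟨u, huw⟩
  have h2 : 1 < {x | adj x w}.ncard :=
    lt_of_le_of_ne h1 (Ne.symm (hT.in_ne_one w))
  obtain ⟨u', hu', hne⟩ := Set.exists_ne_of_one_lt_ncard h2 u
  obtain ⟨a, ha, hau'⟩ := aux_exists_player hT u'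
  have hau : Relation.ReflTransGen adj a u := (hw ⟨ha, hau'.tail hu'⟩).2
  rcases aux_comparable hT.out_unique hau hau' with h | h
  · rcases h.cases_head with rfl | ⟨c, huc, hcu'⟩
    · exact hne rfl
    · rw [hT.out_unique huc huw] at hcu'
      exact hT.acyclic w (Relation.TransGen.tail' hcu' hu')
  · rcases h.cases_head with rfl | ⟨c, hu'c, hcu⟩
    · exact hne rfl
    · rw [hT.out_unique hu'c hu'] at hcu
      exact hT.acyclic w (Relation.TransGen.tail' hcu huw)

lemma aux_isPlayer_iff {adj : V → V → Prop} {u : V} (v : subVert adj u) :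
    IsPlayer (subAdj adj u) v ↔ IsPlayer adj v.1 := by
  constructor
  · intro h w hw
    exact h ⟨w, aux_mem_subVert_of_adj v.2 hw⟩ hw
  · intro h w hw
    exact h w.1 hw

/-- `T_u` is a single-elimination tournament with unique sink `u`,
in-neighborhoods in `T_u` agree with those in `T`, matches of `T_u` are
exactly the matches of `T` lying in `T_u`, and `σ_u` is a scoring system of `T_u`. -/
theorem statement_15 {V : Type*} [Finite V] (adj : V → V → Prop)
    (hT : IsSETournament adj) (σ : V → ℝ) (hσ : IsScoring adj σ) (u : V) :
    IsSETournament (subAdj adj u) ∧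
    IsSink (subAdj adj u) ⟨u, fun _ h => h⟩ ∧
    (∀ v : subVert adj u,
      Subtype.val '' {w : subVert adj u | subAdj adj u w v} = {w : V | adj w v.1}) ∧
    (∀ v : subVert adj u, IsMatch (subAdj adj u) v ↔ IsMatch adj v.1) ∧
    IsScoring (subAdj adj u) (fun v => σ v.1) := by
  have hu : u ∈ subVert adj u := fun _ h => h
  have h3 : ∀ v : subVert adj u,
      Subtype.val '' {w : subVert adj u | subAdj adj u w v} = {w : V | adj w v.1} := by
    intro v
    ext w
    constructor
    · rintro ⟨w', hw', rfl⟩; exact hw'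
    · intro hw; exact ⟨⟨w, aux_mem_subVert_of_adj v.2 hw⟩, hw, rfl⟩
  have hsink : IsSink (subAdj adj u) ⟨u, hu⟩ :=
    fun w hw => aux_sink_u hT u w.1 w.2 hw
  have h4 : ∀ v : subVert adj u, IsMatch (subAdj adj u) v ↔ IsMatch adj v.1 :=
    fun v => not_congr (aux_isPlayer_iff v)
  refine ⟨⟨⟨⟨u, hu⟩, hsink, ?_⟩, ?_, ?_, ?_⟩, hsink, h3, h4, ?_⟩
  · -- uniqueness of the sink
    intro z hz
    obtain ⟨a, ha, haz⟩ := aux_exists_player hT z.1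
    have hau : Relation.ReflTransGen adj a u := (z.2 ⟨ha, haz⟩).2
    apply Subtype.ext
    rcases aux_comparable hT.out_unique haz hau with h | h
    · rcases h.cases_head with h' | ⟨c, hzc, hcu⟩
      · exact h'
      · exact absurd hzc (hz ⟨c, aux_mem_subVert_of_rtg hu hcu⟩)
    · rcases h.cases_head with h' | ⟨c, huc, hcz⟩
      · exact h'.symm
      · exact absurd huc (aux_sink_u hT u c (aux_mem_subVert_of_rtg z.2 hcz))
  · -- out_unique
    intro v w w' hw hw'
    exact Subtype.ext (hT.out_unique hw hw')
  · -- acyclic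
    intro v hv
    have lift : ∀ {x y : subVert adj u}, Relation.TransGen (subAdj adj u) x y →
        Relation.TransGen adj x.1 y.1 := by
      intro x y h
      induction h with
      | single h => exact .single h
      | tail _ h ih => exact ih.tail h
    exact hT.acyclic v.1 (lift hv)
  · -- in_ne_one
    intro v
    have := Set.ncard_image_of_injective {w : subVert adj u | subAdj adj u w v}
      (Subtype.val_injective (p := (· ∈ subVert adj u)))
    rw [h3 v] at this
    rw [show {w | subAdj adj u w v} = {w : subVert adj u | subAdj adj u w v} from rfl,
      ← this]
    exact hT.in_ne_one v.1
  · -- scoring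
    intro x hx
    exact hσ x.1 ((h4 x).1 hx)

end SETour
end

section
/- If T is a single-elimination tournament and u is a vertex of T, then every match x ∈ M(T) that is not a vertex of T_u has at most one in-neighbor v with P(v) ∩ P(u) ≠ ∅. -/
namespace SETour

variable {V : Type*}

/-- helper: if v → x and v →* z with v ≠ z then x →* z -/
lemma step_along {adj : V → V → Prop} (hdet : ∀ ⦃v w w'⦄, adj v w → adj v w' → w = w')
    {v x z : V} (hvx : adj v x) (hvz : Relation.ReflTransGen adj v z) (hne : v ≠ z) :
    Relation.ReflTransGen adj x z := by
  rcases Relation.ReflTransGen.cases_head hvz with rfl | ⟨w, hvw, hwz⟩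
  · exact absurd rfl hne
  · rwa [hdet hvx hvw]

/-- Every match of `T` not in `T_u` has at most one in-neighbor
whose player set meets `P(u)`. -/
theorem statement_16 {V : Type*} [Finite V] (adj : V → V → Prop)
    (hT : IsSETournament adj) (u x : V) (hx : IsMatch adj x)
    (hxu : x ∉ subVert adj u) :
    {v : V | adj v x ∧ (playerSet adj v ∩ playerSet adj u).Nonempty}.Subsingleton := by
  intro v₁ h₁ v₂ h₂
  by_contra hne
  obtain ⟨hv₁x, a₁, ha₁v, ha₁u⟩ := h₁
  obtain ⟨hv₂x, a₂, ha₂v, ha₂u⟩ := h₂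
  have hdet := hT.out_unique
  have hRU : Relator.RightUnique adj := fun _ _ _ h h' => hdet h h'
  -- comparability with u
  have hc₁ := Relation.ReflTransGen.total_of_right_unique hRU ha₁v.2 ha₁u.2
  have hc₂ := Relation.ReflTransGen.total_of_right_unique hRU ha₂v.2 ha₂u.2
  -- if some vᵢ →* u with vᵢ ≠ u then x →* u, hence P x ⊆ P u : contradiction
  have key : ∀ v, adj v x → Relation.ReflTransGen adj v u → v ≠ u →
      False := by
    intro v hvx hvu hvne
    have hxu' : Relation.ReflTransGen adj x u := step_along hdet hvx hvu hvne
    apply hxu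
    intro a ⟨hap, hax⟩
    exact ⟨hap, hax.trans hxu'⟩
  -- helper for cycles: u →* v, v → x, u → x, u ≠ v ⟹ cycle
  have cyc : ∀ v, adj v x → Relation.ReflTransGen adj u v → adj u x → u ≠ v → False := by
    intro v hvx huv hux hne'
    have hxv : Relation.ReflTransGen adj x v := step_along hdet hux huv hne'
    exact hT.acyclic x (Relation.TransGen.tail' hxv hvx)
  rcases hc₁ with h₁u | hu₁
  · rcases eq_or_ne v₁ u with rfl | hne₁
    · -- v₁ = u, so u → x
      rcases hc₂ with h₂u | hu₂
      · rcases eq_or_ne v₂ v₁ with rfl | hne₂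
        · exact hne rfl
        · exact key v₂ hv₂x h₂u hne₂
      · rcases eq_or_ne v₁ v₂ with rfl | hne₂
        · exact hne rfl
        · exact cyc v₂ hv₂x hu₂ hv₁x hne₂
    · exact key v₁ hv₁x h₁u hne₁
  · rcases hc₂ with h₂u | hu₂
    · rcases eq_or_ne v₂ u with rfl | hne₂
      · rcases eq_or_ne v₂ v₁ with rfl | hne'
        · exact hne rfl
        · exact cyc v₁ hv₁x hu₁ hv₂x hne'
      · exact key v₂ hv₂x h₂u hne₂
    · -- u →* v₁ and u →* v₂ : v₁, v₂ comparable
      rcases Relation.ReflTransGen.total_of_right_unique hRU hu₁ hu₂ with h12 | h21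
      · rcases eq_or_ne v₁ v₂ with rfl | hne'
        · exact hne rfl
        · have : Relation.ReflTransGen adj x v₂ := step_along hdet hv₁x h12 hne'
          exact hT.acyclic x (Relation.TransGen.tail' this hv₂x)
      · rcases eq_or_ne v₂ v₁ with rfl | hne'
        · exact hne rfl
        · have : Relation.ReflTransGen adj x v₁ := step_along hdet hv₂x h21 hne'
          exact hT.acyclic x (Relation.TransGen.tail' this hv₁x)

end SETour
end

section
/- Let T be a single-elimination tournament with at least 2 vertices and B̂ a bracket of T. Suppose a, b are distinct players such that the unique out-neighbor x_a of a satisfies b ∈ {B̂(v) : v an in-neighbor of x_a}. Then for any brackets B, B' of T and any scoring system σ satisfying score_σ(B̂_a, B) = score_σ(B̂_a, B') and score_σ(B̂_b, B) = score_σ(B̂_b, B'), we have for every match x that B(x) = a if and only if B'(x) = a. -/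
namespace SETour

variable {V : Type*}

section AuxSE

variable {adj : V → V → Prop}

lemma aux_out_comparable (hT : IsSETournament adj) {c u w : V}
    (hu : Relation.ReflTransGen adj c u) (hw : Relation.ReflTransGen adj c w) :
    Relation.ReflTransGen adj u w ∨ Relation.ReflTransGen adj w u := by
  induction hu with
  | refl => exact Or.inl hw
  | @tail u' u h1 h2 ih =>
    rcases ih with h | h
    · rcases h.cases_head with rfl | ⟨z, hz, hzw⟩
      · exact Or.inr (Relation.ReflTransGen.single h2)
      · rw [hT.out_unique h2 hz]; exact Or.inl hzw
    · exact Or.inr (h.tail h2)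

lemma aux_antisymm (hT : IsSETournament adj) {u w : V}
    (h1 : Relation.ReflTransGen adj u w) (h2 : Relation.ReflTransGen adj w u) : u = w := by
  rcases h1.cases_head with rfl | ⟨z, hz, hzw⟩
  · rfl
  · exact absurd (Relation.TransGen.head' hz (hzw.trans h2)) (hT.acyclic u)

lemma aux_inNbr_unique (hT : IsSETournament adj) {c u y x : V}
    (hux : adj u x) (hyx : adj y x) (hcu : Relation.ReflTransGen adj c u)
    (hcy : Relation.ReflTransGen adj c y) : u = y := by
  have key : ∀ {p q : V}, adj p x → adj q x → Relation.ReflTransGen adj p q → p = q := by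
    intro p q hpx hqx hpq
    rcases hpq.cases_head with rfl | ⟨z, hz, hzq⟩
    · rfl
    · have hxz : x = z := hT.out_unique hpx hz
      subst hxz
      exact absurd (Relation.TransGen.tail' hzq hqx) (hT.acyclic x)
  rcases aux_out_comparable hT hcu hcy with h | h
  · exact key hux hyx h
  · exact (key hyx hux h).symm

lemma aux_wf [Finite V] (hT : IsSETournament adj) : WellFounded (Relation.TransGen adj) := by
  have : IsIrrefl V (Relation.TransGen adj) := ⟨hT.acyclic⟩
  exact Finite.wellFounded_of_trans_of_irrefl _

lemma aux_bracket_reach [Finite V] (hT : IsSETournament adj) {B : V → V}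
    (hB : IsBracket adj B) (x : V) : Relation.ReflTransGen adj (B x) x := by
  refine (aux_wf hT).induction (C := fun x => Relation.ReflTransGen adj (B x) x) x ?_
  intro x ih
  by_cases hx : IsPlayer adj x
  · rw [hB.player_fix x hx]
  · obtain ⟨u, hu, he⟩ := hB.match_pred x hx
    rw [he]
    exact (ih u (Relation.TransGen.single hu)).tail hu

lemma aux_prefix [Finite V] (hT : IsSETournament adj) {B : V → V} {c : V}
    (hB : IsBracket adj B) (hc : IsPlayer adj c) :
    ∀ x, IsMatch adj x → B x = c → ∀ y, IsMatch adj y →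
      Relation.ReflTransGen adj c y → Relation.ReflTransGen adj y x → B y = c := by
  intro x
  refine (aux_wf hT).induction
    (C := fun x => IsMatch adj x → B x = c → ∀ y, IsMatch adj y →
      Relation.ReflTransGen adj c y → Relation.ReflTransGen adj y x → B y = c) x ?_
  intro x ih hx hBx y hy hcy hyx
  rcases hyx.cases_tail with heq | ⟨w, hyw, hwx⟩
  · exact heq ▸ hBx
  · obtain ⟨u, hux, hBu⟩ := hB.match_pred x hx
    have hcu : Relation.ReflTransGen adj c u := by
      have := aux_bracket_reach hT hB u
      rwa [← hBu, hBx] at this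
    have huw : u = w := aux_inNbr_unique hT hux hwx hcu (hcy.trans hyw)
    subst huw
    have hBw : B u = c := by rw [← hBu, hBx]
    by_cases hw : IsPlayer adj u
    · have huc : u = c := by rw [← hB.player_fix u hw, hBw]
      rw [huc] at hyw
      exact absurd hc ((aux_antisymm hT hcy hyw).symm ▸ hy)
    · exact ih u (Relation.TransGen.single hwx) hw hBw y hy hcy hyw

lemma aux_finsum_set {σ : V → ℝ} (S : Set V) (hS : S.Finite) :
    ∑ᶠ y ∈ S, σ y = ∑ y ∈ hS.toFinset, σ y := by
  rw [← finsum_mem_coe_finset, hS.coe_toFinset]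

lemma aux_finsum_nonneg [Finite V] {σ : V → ℝ} {S : Set V} (h : ∀ y ∈ S, 0 < σ y) :
    0 ≤ ∑ᶠ y ∈ S, σ y := by
  rw [aux_finsum_set S S.toFinite]
  exact Finset.sum_nonneg fun y hy => (h y (S.toFinite.mem_toFinset.mp hy)).le

lemma aux_finsum_pos [Finite V] {σ : V → ℝ} {S : Set V} (h : ∀ y ∈ S, 0 < σ y)
    (hne : S.Nonempty) : 0 < ∑ᶠ y ∈ S, σ y := by
  rw [aux_finsum_set S S.toFinite]
  exact Finset.sum_pos (fun y hy => h y (S.toFinite.mem_toFinset.mp hy))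
    (by simpa [Set.Finite.toFinset_nonempty] using hne)

/-- Matches won by `c` in bracket `B0`. -/
def winSet (adj : V → V → Prop) (c : V) (B0 : V → V) : Set V :=
  {y | IsMatch adj y ∧ B0 y = c}

/-- Matches won by `b` that `a` can reach. -/
def wSet (adj : V → V → Prop) (a b : V) (B0 : V → V) : Set V :=
  {y | IsMatch adj y ∧ B0 y = b ∧ Relation.ReflTransGen adj a y}

/-- Matches won by `b` that `a` cannot reach. -/
def rSet (adj : V → V → Prop) (a b : V) (B0 : V → V) : Set V :=
  {y | IsMatch adj y ∧ B0 y = b ∧ ¬ Relation.ReflTransGen adj a y}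

/-- Matches reachable by neither `a` nor `b` where `B0` agrees with `Bh`. -/
def nSet (adj : V → V → Prop) (a b : V) (Bh B0 : V → V) : Set V :=
  {y | IsMatch adj y ∧ ¬ Relation.ReflTransGen adj a y ∧ ¬ Relation.ReflTransGen adj b y
    ∧ B0 y = Bh y}

lemma aux_fav_pos (Bh : V → V) {a y : V} (ha : IsPlayer adj a)
    (h : Relation.ReflTransGen adj a y) : favBracket adj Bh a y = a := by
  unfold favBracket
  exact if_pos ⟨ha, h⟩

lemma aux_fav_neg (Bh : V → V) {a y : V}
    (h : ¬ Relation.ReflTransGen adj a y) : favBracket adj Bh a y = Bh y := by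
  unfold favBracket
  exact if_neg fun hc => h hc.2

lemma aux_bh_b [Finite V] (hT : IsSETournament adj) {Bh : V → V} (hBh : IsBracket adj Bh)
    {a b v xa : V} (hb : IsPlayer adj b) (hxa : adj a xa) (hvxa : adj v xa)
    (hBhv : Bh v = b) {x : V} (hx : IsMatch adj x)
    (hbx : Relation.ReflTransGen adj b x)
    (hax : ¬ Relation.ReflTransGen adj a x) : Bh x = b := by
  have hbv : Relation.ReflTransGen adj b v := by
    have := aux_bracket_reach hT hBh v; rwa [hBhv] at this
  rcases aux_out_comparable hT hbx hbv with hxv | hvx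
  · by_cases hv : IsPlayer adj v
    · have hvb : v = b := by rw [← hBh.player_fix v hv, hBhv]
      rw [hvb] at hxv
      have hbx2 : b = x := aux_antisymm hT hbx hxv
      exact absurd (hbx2 ▸ hb) hx
    · exact aux_prefix hT hBh hb v hv hBhv x hx hbx hxv
  · rcases hvx.cases_head with heq | ⟨z, hz, hzx⟩
    · rw [← heq]; exact hBhv
    · have hxaz : xa = z := hT.out_unique hvxa hz
      subst hxaz
      exact absurd ((Relation.ReflTransGen.single hxa).trans hzx) hax

lemma aux_a_to_b [Finite V] (hT : IsSETournament adj) {Bh : V → V} (hBh : IsBracket adj Bh)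
    {a b v xa : V} (ha : IsPlayer adj a) (hxa : adj a xa) (hvxa : adj v xa)
    (hBhv : Bh v = b) {y : V} (hy : IsMatch adj y)
    (hay : Relation.ReflTransGen adj a y) : Relation.ReflTransGen adj b y := by
  have hbv : Relation.ReflTransGen adj b v := by
    have := aux_bracket_reach hT hBh v; rwa [hBhv] at this
  have hbxa : Relation.ReflTransGen adj b xa := hbv.tail hvxa
  rcases hay.cases_head with heq | ⟨z, hz, hzy⟩
  · exact absurd (heq ▸ ha) hy
  · have : xa = z := hT.out_unique hxa hz
    subst this
    exact hbxa.trans hzy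

lemma aux_score_a [Finite V] (hT : IsSETournament adj) {Bh B0 : V → V}
    (hBh : IsBracket adj Bh) (hB0 : IsBracket adj B0) {a b v xa : V}
    (ha : IsPlayer adj a) (hb : IsPlayer adj b) (hab : a ≠ b)
    (hxa : adj a xa) (hvxa : adj v xa) (hBhv : Bh v = b) (σ : V → ℝ) :
    score adj σ (favBracket adj Bh a) B0 =
      (∑ᶠ y ∈ winSet adj a B0, σ y) +
      ((∑ᶠ y ∈ rSet adj a b B0, σ y) + (∑ᶠ y ∈ nSet adj a b Bh B0, σ y)) := by
  have hset : {y | IsMatch adj y ∧ favBracket adj Bh a y = B0 y}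
      = winSet adj a B0 ∪ (rSet adj a b B0 ∪ nSet adj a b Bh B0) := by
    ext y
    simp only [Set.mem_setOf_eq, Set.mem_union, winSet, rSet, nSet]
    constructor
    · rintro ⟨hy, he⟩
      by_cases hay : Relation.ReflTransGen adj a y
      · exact Or.inl ⟨hy, by rw [← he, aux_fav_pos Bh ha hay]⟩
      · rw [aux_fav_neg Bh hay] at he
        by_cases hby : Relation.ReflTransGen adj b y
        · have hbh : Bh y = b := aux_bh_b hT hBh hb hxa hvxa hBhv hy hby hay
          exact Or.inr (Or.inl ⟨hy, by rw [← he, hbh], hay⟩)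
        · exact Or.inr (Or.inr ⟨hy, hay, hby, he.symm⟩)
    · rintro (⟨hy, he⟩ | ⟨hy, he, hay⟩ | ⟨hy, hay, hby, he⟩)
      · have hay : Relation.ReflTransGen adj a y := by
          have := aux_bracket_reach hT hB0 y; rwa [he] at this
        exact ⟨hy, by rw [aux_fav_pos Bh ha hay, he]⟩
      · have hby : Relation.ReflTransGen adj b y := by
          have := aux_bracket_reach hT hB0 y; rwa [he] at this
        have hbh : Bh y = b := aux_bh_b hT hBh hb hxa hvxa hBhv hy hby hay
        exact ⟨hy, by rw [aux_fav_neg Bh hay, hbh, he]⟩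
      · exact ⟨hy, by rw [aux_fav_neg Bh hay, he]⟩
  have d1 : Disjoint (winSet adj a B0) (rSet adj a b B0 ∪ nSet adj a b Bh B0) := by
    rw [Set.disjoint_left]
    rintro y ⟨hy, he⟩ (⟨_, _, hay⟩ | ⟨_, hay, _, _⟩) <;>
      exact hay (by have := aux_bracket_reach hT hB0 y; rwa [he] at this)
  have d2 : Disjoint (rSet adj a b B0) (nSet adj a b Bh B0) := by
    rw [Set.disjoint_left]
    rintro y ⟨hy, he, _⟩ ⟨_, _, hby, _⟩
    exact hby (by have := aux_bracket_reach hT hB0 y; rwa [he] at this)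
  rw [score, hset, finsum_mem_union d1 (Set.toFinite _) (Set.toFinite _),
    finsum_mem_union d2 (Set.toFinite _) (Set.toFinite _)]

lemma aux_score_b [Finite V] (hT : IsSETournament adj) {Bh B0 : V → V}
    (hBh : IsBracket adj Bh) (hB0 : IsBracket adj B0) {a b v xa : V}
    (ha : IsPlayer adj a) (hb : IsPlayer adj b)
    (hxa : adj a xa) (hvxa : adj v xa) (hBhv : Bh v = b) (σ : V → ℝ) :
    score adj σ (favBracket adj Bh b) B0 =
      ((∑ᶠ y ∈ wSet adj a b B0, σ y) + (∑ᶠ y ∈ rSet adj a b B0, σ y)) +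
      (∑ᶠ y ∈ nSet adj a b Bh B0, σ y) := by
  have hset : {y | IsMatch adj y ∧ favBracket adj Bh b y = B0 y}
      = (wSet adj a b B0 ∪ rSet adj a b B0) ∪ nSet adj a b Bh B0 := by
    ext y
    simp only [Set.mem_setOf_eq, Set.mem_union, wSet, rSet, nSet]
    constructor
    · rintro ⟨hy, he⟩
      by_cases hby : Relation.ReflTransGen adj b y
      · rw [aux_fav_pos Bh hb hby] at he
        by_cases hay : Relation.ReflTransGen adj a y
        · exact Or.inl (Or.inl ⟨hy, he.symm, hay⟩)
        · exact Or.inl (Or.inr ⟨hy, he.symm, hay⟩)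
      · have hay : ¬ Relation.ReflTransGen adj a y :=
          fun h => hby (aux_a_to_b hT hBh ha hxa hvxa hBhv hy h)
        rw [aux_fav_neg Bh hby] at he
        exact Or.inr ⟨hy, hay, hby, he.symm⟩
    · rintro ((⟨hy, he, _⟩ | ⟨hy, he, _⟩) | ⟨hy, hay, hby, he⟩)
      · have hby : Relation.ReflTransGen adj b y := by
          have := aux_bracket_reach hT hB0 y; rwa [he] at this
        exact ⟨hy, by rw [aux_fav_pos Bh hb hby, he]⟩
      · have hby : Relation.ReflTransGen adj b y := by
          have := aux_bracket_reach hT hB0 y; rwa [he] at this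
        exact ⟨hy, by rw [aux_fav_pos Bh hb hby, he]⟩
      · exact ⟨hy, by rw [aux_fav_neg Bh hby, he]⟩
  have d1 : Disjoint (wSet adj a b B0) (rSet adj a b B0) := by
    rw [Set.disjoint_left]
    rintro y ⟨_, _, hay⟩ ⟨_, _, hay'⟩
    exact hay' hay
  have d2 : Disjoint (wSet adj a b B0 ∪ rSet adj a b B0) (nSet adj a b Bh B0) := by
    rw [Set.disjoint_left]
    rintro y (⟨hy, he, _⟩ | ⟨hy, he, _⟩) ⟨_, _, hby, _⟩ <;>
      exact hby (by have := aux_bracket_reach hT hB0 y; rwa [he] at this)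
  rw [score, hset, finsum_mem_union d2 (Set.toFinite _) (Set.toFinite _),
    finsum_mem_union d1 (Set.toFinite _) (Set.toFinite _)]

end AuxSE


/-- If some in-neighbor of `x_a` is predicted by `B̂` to be won by
`b`, then two brackets with equal σ-scores against `B̂_a` and `B̂_b` agree on
whether `a` wins each match. -/
theorem statement_18 {V : Type*} [Finite V] (adj : V → V → Prop)
    (hT : IsSETournament adj) (h2 : 2 ≤ Nat.card V)
    (Bh : V → V) (hBh : IsBracket adj Bh)
    (a b : V) (ha : IsPlayer adj a) (hb : IsPlayer adj b) (hab : a ≠ b)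
    (xa : V) (hxa : adj a xa)
    (hbv : ∃ v, adj v xa ∧ Bh v = b)
    (B B' : V → V) (hB : IsBracket adj B) (hB' : IsBracket adj B')
    (σ : V → ℝ) (hσ : IsScoring adj σ)
    (hsa : score adj σ (favBracket adj Bh a) B = score adj σ (favBracket adj Bh a) B')
    (hsb : score adj σ (favBracket adj Bh b) B = score adj σ (favBracket adj Bh b) B')
    (x : V) (hx : IsMatch adj x) :
    B x = a ↔ B' x = a := by
  classical
  obtain ⟨v, hvxa, hBhv⟩ := hbv
  have hxam : IsMatch adj xa := fun hp => hp a hxa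
  have hbxa : Relation.ReflTransGen adj b xa := by
    have := aux_bracket_reach hT hBh v
    rw [hBhv] at this
    exact this.tail hvxa
  have e1 := hsa
  rw [aux_score_a hT hBh hB ha hb hab hxa hvxa hBhv σ,
    aux_score_a hT hBh hB' ha hb hab hxa hvxa hBhv σ] at e1
  have e2 := hsb
  rw [aux_score_b hT hBh hB ha hb hxa hvxa hBhv σ,
    aux_score_b hT hBh hB' ha hb hxa hvxa hBhv σ] at e2
  have key : (∑ᶠ y ∈ winSet adj a B, σ y) - (∑ᶠ y ∈ wSet adj a b B, σ y)
      = (∑ᶠ y ∈ winSet adj a B', σ y) - (∑ᶠ y ∈ wSet adj a b B', σ y) := by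
    linarith
  -- if a wins any match, a wins x_a; if b wins any a-reachable match, b wins x_a
  have hA_xa : ∀ B0, IsBracket adj B0 → (winSet adj a B0).Nonempty → B0 xa = a := by
    rintro B0 hB0 ⟨y, hy, hBy⟩
    have hay : Relation.ReflTransGen adj a y := by
      have := aux_bracket_reach hT hB0 y; rwa [hBy] at this
    have hxay : Relation.ReflTransGen adj xa y := by
      rcases hay.cases_head with heq | ⟨z, hz, hzy⟩
      · exact absurd (heq ▸ ha) hy
      · rwa [hT.out_unique hxa hz]
    exact aux_prefix hT hB0 ha y hy hBy xa hxam (Relation.ReflTransGen.single hxa) hxay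
  have hW_xa : ∀ B0, IsBracket adj B0 → (wSet adj a b B0).Nonempty → B0 xa = b := by
    rintro B0 hB0 ⟨y, hy, hBy, hay⟩
    have hxay : Relation.ReflTransGen adj xa y := by
      rcases hay.cases_head with heq | ⟨z, hz, hzy⟩
      · exact absurd (heq ▸ ha) hy
      · rwa [hT.out_unique hxa hz]
    exact aux_prefix hT hB0 hb y hy hBy xa hxam hbxa hxay
  have hnot_both : ∀ B0, IsBracket adj B0 → (wSet adj a b B0).Nonempty →
      winSet adj a B0 = ∅ := by
    intro B0 hB0 hW
    rw [Set.eq_empty_iff_forall_notMem]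
    intro y hy
    exact hab (by rw [← hA_xa B0 hB0 ⟨y, hy⟩, hW_xa B0 hB0 hW])
  rcases Set.eq_empty_or_nonempty (wSet adj a b B) with hWB | hWB
  · rcases Set.eq_empty_or_nonempty (wSet adj a b B') with hWB' | hWB'
    · -- both wSets empty: the winSets have equal sums, hence are equal
      rw [hWB, hWB', finsum_mem_empty] at key
      have hkey : ∑ᶠ y ∈ winSet adj a B, σ y = ∑ᶠ y ∈ winSet adj a B', σ y := by
        linarith
      have hsub : ∀ B1 B2 : V → V, IsBracket adj B1 → IsBracket adj B2 →
          winSet adj a B1 ⊆ winSet adj a B2 ∨ winSet adj a B2 ⊆ winSet adj a B1 := by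
        intro B1 B2 hB1 hB2
        by_contra hcon
        push_neg at hcon
        obtain ⟨y1, hy1, hny1⟩ := Set.not_subset.mp hcon.1
        obtain ⟨y2, hy2, hny2⟩ := Set.not_subset.mp hcon.2
        have hay1 : Relation.ReflTransGen adj a y1 := by
          have := aux_bracket_reach hT hB1 y1; rwa [hy1.2] at this
        have hay2 : Relation.ReflTransGen adj a y2 := by
          have := aux_bracket_reach hT hB2 y2; rwa [hy2.2] at this
        rcases aux_out_comparable hT hay1 hay2 with h | h
        · exact hny1 ⟨hy1.1, aux_prefix hT hB2 ha y2 hy2.1 hy2.2 y1 hy1.1 hay1 h⟩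
        · exact hny2 ⟨hy2.1, aux_prefix hT hB1 ha y1 hy1.1 hy1.2 y2 hy2.1 hay2 h⟩
      have heqA : winSet adj a B = winSet adj a B' := by
        have step : ∀ B1 B2 : V → V, winSet adj a B1 ⊆ winSet adj a B2 →
            (∑ᶠ y ∈ winSet adj a B1, σ y) = (∑ᶠ y ∈ winSet adj a B2, σ y) →
            winSet adj a B1 = winSet adj a B2 := by
          intro B1 B2 hss hsum
          have hu : winSet adj a B2
              = winSet adj a B1 ∪ (winSet adj a B2 \ winSet adj a B1) :=
            (Set.union_diff_cancel hss).symm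
          rw [hu, finsum_mem_union Set.disjoint_sdiff_right (Set.toFinite _)
            (Set.toFinite _)] at hsum
          have hz : ∑ᶠ y ∈ winSet adj a B2 \ winSet adj a B1, σ y = 0 := by linarith
          have hde : winSet adj a B2 \ winSet adj a B1 = ∅ := by
            by_contra hne
            have := aux_finsum_pos (σ := σ)
              (S := winSet adj a B2 \ winSet adj a B1)
              (fun y hy => hσ y hy.1.1) (Set.nonempty_iff_ne_empty.mpr hne)
            linarith
          rw [hu, hde, Set.union_empty]
        rcases hsub B B' hB hB' with h | h
        · exact step B B' h hkey
        · exact (step B' B h hkey.symm).symm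
      constructor
      · intro h
        have : x ∈ winSet adj a B' := heqA ▸ (⟨hx, h⟩ : x ∈ winSet adj a B)
        exact this.2
      · intro h
        have : x ∈ winSet adj a B := heqA.symm ▸ (⟨hx, h⟩ : x ∈ winSet adj a B')
        exact this.2
    · -- wSet B empty, wSet B' nonempty: contradiction via signs
      exfalso
      have hA' : winSet adj a B' = ∅ := hnot_both B' hB' hWB'
      rw [hWB, hA', finsum_mem_empty] at key
      have h1 : 0 ≤ ∑ᶠ y ∈ winSet adj a B, σ y :=
        aux_finsum_nonneg fun y hy => hσ y hy.1
      have h2 : 0 < ∑ᶠ y ∈ wSet adj a b B', σ y :=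
        aux_finsum_pos (fun y hy => hσ y hy.1) hWB'
      linarith
  · have hA : winSet adj a B = ∅ := hnot_both B hB hWB
    rcases Set.eq_empty_or_nonempty (wSet adj a b B') with hWB' | hWB'
    · exfalso
      rw [hWB', hA, finsum_mem_empty] at key
      have h1 : 0 ≤ ∑ᶠ y ∈ winSet adj a B', σ y :=
        aux_finsum_nonneg fun y hy => hσ y hy.1
      have h2 : 0 < ∑ᶠ y ∈ wSet adj a b B, σ y :=
        aux_finsum_pos (fun y hy => hσ y hy.1) hWB
      linarith
    · have hA' : winSet adj a B' = ∅ := hnot_both B' hB' hWB'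
      constructor
      · intro h
        exact absurd (Set.eq_empty_iff_forall_notMem.mp hA x ⟨hx, h⟩) not_false
      · intro h
        exact absurd (Set.eq_empty_iff_forall_notMem.mp hA' x ⟨hx, h⟩) not_false

end SETour
end

section
/- For any single-elimination tournament T, any scoring system σ, and any bracket B̂ of T, the set of brackets {B̂_a : a ∈ P(T)} is a σ-resolving set. -/
namespace SETour

variable {V : Type*}

section Aux

variable {V : Type*} {adj : V → V → Prop}

lemma wf_adj [Finite V] (hT : IsSETournament adj) : WellFounded (fun u v : V => adj u v) := by
  haveI : IsIrrefl V (Relation.TransGen adj) := ⟨hT.acyclic⟩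
  exact Subrelation.wf (fun h => Relation.TransGen.single h)
    (Finite.wellFounded_of_trans_of_irrefl _)

lemma bracket_mem_playerSet [Finite V] (hT : IsSETournament adj) {B : V → V}
    (hB : IsBracket adj B) (v : V) : B v ∈ playerSet adj v := by
  refine (wf_adj hT).induction (C := fun v => B v ∈ playerSet adj v) v ?_
  intro x ih
  by_cases hx : IsPlayer adj x
  · exact ⟨hB.toPlayer x, by rw [hB.player_fix x hx]⟩
  · obtain ⟨u, hu, he⟩ := hB.match_pred x hx
    exact ⟨hB.toPlayer x, by rw [he]; exact (ih u hu).2.tail hu⟩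

lemma reach_linear (hT : IsSETournament adj) {a v w : V}
    (hv : Relation.ReflTransGen adj a v) (hw : Relation.ReflTransGen adj a w) :
    Relation.ReflTransGen adj v w ∨ Relation.ReflTransGen adj w v := by
  induction hv with
  | refl => exact Or.inl hw
  | tail hav' hstep ih =>
    rcases ih with h | h
    · rcases h.cases_head with rfl | ⟨c, hc, hcw⟩
      · exact Or.inr (Relation.ReflTransGen.single hstep)
      · have hcv : c = _ := hT.out_unique hc hstep
        exact Or.inl (hcv ▸ hcw)
    · exact Or.inr (h.tail hstep)

lemma reach_antisymm (hT : IsSETournament adj) {v w : V}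
    (h1 : Relation.ReflTransGen adj v w) (h2 : Relation.ReflTransGen adj w v) : v = w := by
  rcases Relation.reflTransGen_iff_eq_or_transGen.mp h1 with rfl | h1'
  · rfl
  rcases Relation.reflTransGen_iff_eq_or_transGen.mp h2 with rfl | h2'
  · rfl
  exact absurd (h1'.trans h2') (hT.acyclic v)

lemma win_prefix [Finite V] (hT : IsSETournament adj) {B : V → V} (hB : IsBracket adj B)
    {a : V} (ha : IsPlayer adj a) (x : V) :
    B x = a → ∀ v, Relation.ReflTransGen adj a v → Relation.ReflTransGen adj v x → B v = a := by
  refine (wf_adj hT).induction (C := fun x => B x = a → ∀ v, Relation.ReflTransGen adj a v → Relation.ReflTransGen adj v x → B v = a) x ?_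
  intro x ih hx v hav hvx
  by_cases hxp : IsPlayer adj x
  · have hxa : x = a := by rw [← hx, hB.player_fix x hxp]
    have hva : v = a := reach_antisymm hT (hxa ▸ hvx) hav
    rw [hva, hB.player_fix a ha]
  · obtain ⟨u, hu, he⟩ := hB.match_pred x hxp
    have hua : B u = a := by rw [← he]; exact hx
    have hau : Relation.ReflTransGen adj a u := by
      have h2 := (bracket_mem_playerSet hT hB u).2; rwa [hua] at h2
    rcases reach_linear hT hav hau with hvu | huv
    · exact ih u hu hua v hav hvu
    · rcases huv.cases_head with heq | ⟨c, hc, hcv⟩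
      · rw [← heq]; exact hua
      · have hcx : c = x := hT.out_unique hc hu
        have hvx' : v = x := reach_antisymm hT hvx (hcx ▸ hcv)
        rw [hvx']; exact hx

lemma wins_subset [Finite V] (hT : IsSETournament adj) {B B' : V → V}
    (hB : IsBracket adj B) (hB' : IsBracket adj B') {x₀ : V}
    (hagree : ∀ y, Relation.TransGen adj y x₀ → B y = B' y) (hd : B x₀ ≠ B' x₀) :
    {x | IsMatch adj x ∧ B' x = B x₀} ⊆ {x | IsMatch adj x ∧ B x = B x₀} := by
  intro y hy
  obtain ⟨hym, hy'⟩ := hy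
  have ha : IsPlayer adj (B x₀) := hB.toPlayer x₀
  have hax₀ : Relation.ReflTransGen adj (B x₀) x₀ := (bracket_mem_playerSet hT hB x₀).2
  have hay : Relation.ReflTransGen adj (B x₀) y := by
    have h2 := (bracket_mem_playerSet hT hB' y).2; rwa [hy'] at h2
  rcases reach_linear hT hax₀ hay with h | h
  · exact absurd (win_prefix hT hB' ha y hy' x₀ hax₀ h).symm hd
  · rcases Relation.reflTransGen_iff_eq_or_transGen.mp h with heq | htg
    · subst heq; exact absurd hy'.symm hd
    · exact ⟨hym, (hagree y htg).trans hy'⟩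

lemma finsum_split {V : Type*} [Finite V] (σ : V → ℝ) {s t : Set V} (hts : t ⊆ s) :
    (∑ᶠ x ∈ s, σ x) = (∑ᶠ x ∈ t, σ x) + ∑ᶠ x ∈ s \ t, σ x := by
  rw [← finsum_mem_union Set.disjoint_sdiff_right (Set.toFinite _) (Set.toFinite _),
    Set.union_diff_cancel hts]

lemma finsum_pos_of_mem {V : Type*} [Finite V] (σ : V → ℝ) {s : Set V}
    (hpos : ∀ x ∈ s, 0 < σ x) {x₀ : V} (hx₀ : x₀ ∈ s) : 0 < ∑ᶠ x ∈ s, σ x := by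
  have hfin : s.Finite := Set.toFinite s
  rw [← hfin.coe_toFinset, finsum_mem_coe_finset]
  exact Finset.sum_pos (fun i hi => hpos i (hfin.mem_toFinset.mp hi))
    ⟨x₀, hfin.mem_toFinset.mpr hx₀⟩

end Aux


/-- For any bracket `B̂`, the set `{B̂_a : a ∈ P(T)}` is a
σ-resolving set for every scoring system σ. -/
theorem statement_19 {V : Type*} [Finite V] (adj : V → V → Prop)
    (hT : IsSETournament adj) (σ : V → ℝ) (hσ : IsScoring adj σ)
    (Bh : V → V) (hBh : IsBracket adj Bh) :
    IsResolving adj σ {B | ∃ a, IsPlayer adj a ∧ B = favBracket adj Bh a} := by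
  intro B B' hB hB' hne
  classical
  -- well-founded TransGen for choosing a minimal differing match
  have hwf : WellFounded (Relation.TransGen adj) := by
    haveI : IsIrrefl V (Relation.TransGen adj) := ⟨hT.acyclic⟩
    exact Finite.wellFounded_of_trans_of_irrefl _
  have hDne : {x | B x ≠ B' x}.Nonempty := Function.ne_iff.mp hne
  obtain ⟨x₀, hx₀D, hmin⟩ := hwf.has_min _ hDne
  have hx₀D : B x₀ ≠ B' x₀ := hx₀D
  have hagree : ∀ y, Relation.TransGen adj y x₀ → B y = B' y := by
    intro y hy
    by_contra h
    exact hmin y h hy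
  have hx₀m : IsMatch adj x₀ := by
    intro hp
    exact hx₀D (by rw [hB.player_fix _ hp, hB'.player_fix _ hp])
  have ha : IsPlayer adj (B x₀) := hB.toPlayer x₀
  have hb : IsPlayer adj (B' x₀) := hB'.toPlayer x₀
  have hax₀ : Relation.ReflTransGen adj (B x₀) x₀ := (bracket_mem_playerSet hT hB x₀).2
  have hbx₀ : Relation.ReflTransGen adj (B' x₀) x₀ := (bracket_mem_playerSet hT hB' x₀).2
  -- on differing matches, membership of a and b in the player set coincide
  have keyiff : ∀ y, B y ≠ B' y →
      (B x₀ ∈ playerSet adj y ↔ B' x₀ ∈ playerSet adj y) := by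
    intro y hdiff
    have dir : ∀ p q : V, IsPlayer adj q → Relation.ReflTransGen adj p x₀ →
        Relation.ReflTransGen adj q x₀ → p ∈ playerSet adj y → q ∈ playerSet adj y := by
      intro p q hq hpx hqx hpy
      rcases reach_linear hT hpx hpy.2 with h | h
      · exact ⟨hq, hqx.trans h⟩
      · rcases Relation.reflTransGen_iff_eq_or_transGen.mp h with heq | htg
        · exact heq ▸ (⟨hq, hqx⟩ : q ∈ playerSet adj x₀)
        · exact absurd (hagree y htg) hdiff
    exact ⟨dir _ _ hb hax₀ hbx₀, dir _ _ ha hbx₀ hax₀⟩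
  -- score decomposition against a favorite bracket
  have hscore : ∀ (C : V → V), IsBracket adj C → ∀ p : V,
      score adj σ (favBracket adj Bh p) C =
        (∑ᶠ x ∈ {x | IsMatch adj x ∧ C x = p}, σ x) +
        ∑ᶠ x ∈ {x | IsMatch adj x ∧ p ∉ playerSet adj x ∧ Bh x = C x}, σ x := by
    intro C hC p
    have hset : {x | IsMatch adj x ∧ favBracket adj Bh p x = C x} =
        {x | IsMatch adj x ∧ C x = p} ∪
        {x | IsMatch adj x ∧ p ∉ playerSet adj x ∧ Bh x = C x} := by
      ext x
      simp only [Set.mem_setOf_eq, Set.mem_union, favBracket]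
      by_cases hmem : p ∈ playerSet adj x
      · rw [if_pos hmem]
        constructor
        · rintro ⟨hm, hfx⟩; exact Or.inl ⟨hm, hfx.symm⟩
        · rintro (⟨hm, hCx⟩ | ⟨hm, hnp, _⟩)
          · exact ⟨hm, hCx.symm⟩
          · exact absurd hmem hnp
      · rw [if_neg hmem]
        constructor
        · rintro ⟨hm, hfx⟩; exact Or.inr ⟨hm, hmem, hfx⟩
        · rintro (⟨hm, hCx⟩ | ⟨hm, _, hbh⟩)
          · exact absurd (hCx ▸ bracket_mem_playerSet hT hC x) hmem
          · exact ⟨hm, hbh⟩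
    have hdisj : Disjoint {x | IsMatch adj x ∧ C x = p}
        {x | IsMatch adj x ∧ p ∉ playerSet adj x ∧ Bh x = C x} := by
      rw [Set.disjoint_left]
      rintro x ⟨hm, hCx⟩ ⟨_, hnp, _⟩
      exact hnp (hCx ▸ bracket_mem_playerSet hT hC x)
    rw [score, hset, finsum_mem_union hdisj (Set.toFinite _) (Set.toFinite _)]
  -- abbreviations
  set a := B x₀ with ha_def
  set b := B' x₀ with hb_def
  -- win-set inclusions
  have hWa : {x | IsMatch adj x ∧ B' x = a} ⊆ {x | IsMatch adj x ∧ B x = a} :=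
    wins_subset hT hB hB' hagree hx₀D
  have hWb : {x | IsMatch adj x ∧ B x = b} ⊆ {x | IsMatch adj x ∧ B' x = b} :=
    wins_subset hT hB' hB (fun y hy => (hagree y hy).symm) (Ne.symm hx₀D)
  have hx₀a : x₀ ∈ {x | IsMatch adj x ∧ B x = a} \ {x | IsMatch adj x ∧ B' x = a} :=
    ⟨⟨hx₀m, rfl⟩, fun h => hx₀D h.2.symm⟩
  have hx₀b : x₀ ∈ {x | IsMatch adj x ∧ B' x = b} \ {x | IsMatch adj x ∧ B x = b} :=
    ⟨⟨hx₀m, rfl⟩, fun h => hx₀D h.2⟩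
  -- the off-chain difference sets coincide for a and b
  have hGsub : ∀ (p q : V) (C C' : V → V),
      (∀ y, C y ≠ C' y → q ∈ playerSet adj y → p ∈ playerSet adj y) →
      {x | IsMatch adj x ∧ p ∉ playerSet adj x ∧ Bh x = C x} \
        {x | IsMatch adj x ∧ p ∉ playerSet adj x ∧ Bh x = C' x} ⊆
      {x | IsMatch adj x ∧ q ∉ playerSet adj x ∧ Bh x = C x} \
        {x | IsMatch adj x ∧ q ∉ playerSet adj x ∧ Bh x = C' x} := by
    intro p q C C' hpq y hy
    obtain ⟨⟨hm, hnp, hbh⟩, hnot⟩ := hy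
    have hdiff : C y ≠ C' y := fun h => hnot ⟨hm, hnp, hbh.trans h⟩
    have hnq : q ∉ playerSet adj y := fun hq => hnp (hpq y hdiff hq)
    exact ⟨⟨hm, hnq, hbh⟩, fun h => hdiff (hbh.symm.trans h.2.2)⟩
  have hG1 : {x | IsMatch adj x ∧ a ∉ playerSet adj x ∧ Bh x = B x} \
        {x | IsMatch adj x ∧ a ∉ playerSet adj x ∧ Bh x = B' x} =
      {x | IsMatch adj x ∧ b ∉ playerSet adj x ∧ Bh x = B x} \
        {x | IsMatch adj x ∧ b ∉ playerSet adj x ∧ Bh x = B' x} :=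
    Set.Subset.antisymm
      (hGsub a b B B' fun y hd => (keyiff y hd).mpr)
      (hGsub b a B B' fun y hd => (keyiff y hd).mp)
  have hG2 : {x | IsMatch adj x ∧ a ∉ playerSet adj x ∧ Bh x = B' x} \
        {x | IsMatch adj x ∧ a ∉ playerSet adj x ∧ Bh x = B x} =
      {x | IsMatch adj x ∧ b ∉ playerSet adj x ∧ Bh x = B' x} \
        {x | IsMatch adj x ∧ b ∉ playerSet adj x ∧ Bh x = B x} :=
    Set.Subset.antisymm
      (hGsub a b B' B fun y hd => (keyiff y hd.symm).mpr)
      (hGsub b a B' B fun y hd => (keyiff y hd.symm).mp)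
  -- difference of the off-chain sums
  have hGdiff : ∀ s t : Set V,
      (∑ᶠ x ∈ s, σ x) - (∑ᶠ x ∈ t, σ x) =
        (∑ᶠ x ∈ s \ t, σ x) - ∑ᶠ x ∈ t \ s, σ x := by
    intro s t
    rw [finsum_split σ (Set.inter_subset_left : s ∩ t ⊆ s),
      finsum_split σ (Set.inter_subset_right : s ∩ t ⊆ t),
      Set.diff_self_inter, Set.diff_inter_self_eq_diff]
    ring
  -- suppose both scores agree; derive a contradiction
  by_contra hcon
  push_neg at hcon
  have e1 := hcon (favBracket adj Bh a) ⟨a, ha, rfl⟩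
  have e2 := hcon (favBracket adj Bh b) ⟨b, hb, rfl⟩
  rw [hscore B hB a, hscore B' hB' a] at e1
  rw [hscore B hB b, hscore B' hB' b] at e2
  -- win-sum strict inequalities
  have hwa := finsum_split σ hWa
  have hwb := finsum_split σ hWb
  have hposa : 0 < ∑ᶠ x ∈ ({x | IsMatch adj x ∧ B x = a} \
      {x | IsMatch adj x ∧ B' x = a}), σ x :=
    finsum_pos_of_mem σ (fun x hx => hσ x hx.1.1) hx₀a
  have hposb : 0 < ∑ᶠ x ∈ ({x | IsMatch adj x ∧ B' x = b} \
      {x | IsMatch adj x ∧ B x = b}), σ x :=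
    finsum_pos_of_mem σ (fun x hx => hσ x hx.1.1) hx₀b
  -- off-chain sums: equal differences
  have hca := hGdiff {x | IsMatch adj x ∧ a ∉ playerSet adj x ∧ Bh x = B x}
    {x | IsMatch adj x ∧ a ∉ playerSet adj x ∧ Bh x = B' x}
  have hcb := hGdiff {x | IsMatch adj x ∧ b ∉ playerSet adj x ∧ Bh x = B x}
    {x | IsMatch adj x ∧ b ∉ playerSet adj x ∧ Bh x = B' x}
  rw [hG1, hG2] at hca
  linarith

end SETour
end
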